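/- arXiv:1201.4154 — 3 statements merged into one kernel-verified Lean document; each statement's English description precedes it below -/
import Mathlib

section
/- With θ a 2n×m matrix of odd elements of a supercommutative superalgebra, θ̂ = θᵀJ, and B := √(I_{2n} − θθ̂) defined by the (finite, terminating) binomial Taylor series in the nilpotent matrix θθ̂, one has BᵀJ = JB. -/
/-!
Write `M = θθ̂ = P J` with `P = θθᵀ`. Since the entries of `θ` anticommute, `P` is
skew-symmetric and its entries, being even, commute with each other; the entries of `J` are
integers, hence central. So the entries of `M` commute pairwise and transposition reverses
products of powers of `M` as over a commutative ring. Then `Mᵀ = J P`, i.e. `Mᵀ J = J M`, which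
propagates to every power of `M` and so to the binomial series defining `B`.
-/

noncomputable section

open Matrix

/-- The standard symplectic matrix `J = [[0, Iₙ],[-Iₙ, 0]]`, with entries in `Λ`. -/
def sympJ (n : ℕ) (Λ : Type*) [Ring Λ] :
    Matrix (Fin n ⊕ Fin n) (Fin n ⊕ Fin n) Λ :=
  Matrix.fromBlocks 0 1 (-1) 0

/-- The binomial coefficient `binom(1/2, k)`, the `k`-th Taylor coefficient of `√(1+x)`. -/
def sqrtCoeff (k : ℕ) : ℝ :=
  (∏ i ∈ Finset.range k, ((1 : ℝ) / 2 - (i : ℝ))) / (Nat.factorial k)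

/-- The terminating binomial Taylor series `√(1 - M) = Σ_{k<K} binom(1/2,k) (-M)^k`
for a matrix `M` with nilpotent entries. -/
def sqrtOneSub {ι : Type*} [Fintype ι] [DecidableEq ι] {Λ : Type*} [Ring Λ]
    [Algebra ℝ Λ] (K : ℕ) (M : Matrix ι ι Λ) : Matrix ι ι Λ :=
  ∑ k ∈ Finset.range K, sqrtCoeff k • (-M) ^ k

namespace Matrix

variable {ι κ ρ Λ : Type*} [Ring Λ]

lemma commute_mul_apply [Fintype κ] {A : Matrix ι κ Λ} {B : Matrix κ ρ Λ} {x : Λ}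
    (hA : ∀ i j, Commute (A i j) x) (hB : ∀ i j, Commute (B i j) x) (i : ι) (j : ρ) :
    Commute ((A * B) i j) x :=
  Commute.sum_left _ _ _ fun p _ => (hA i p).mul_left (hB p j)

lemma commute_pow_apply [Fintype ι] [DecidableEq ι] {A : Matrix ι ι Λ} {x : Λ}
    (hA : ∀ i j, Commute (A i j) x) (k : ℕ) (i j : ι) : Commute ((A ^ k) i j) x := by
  induction k generalizing i j with
  | zero =>
    rw [pow_zero, one_apply]
    split_ifs
    exacts [Commute.one_left x, Commute.zero_left x]
  | succ k ih => rw [pow_succ]; exact commute_mul_apply ih hA i j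

lemma transpose_mul_of_commute [Fintype κ] (A : Matrix ι κ Λ) (B : Matrix κ ρ Λ)
    (h : ∀ i j k l, Commute (A i j) (B k l)) : (A * B)ᵀ = Bᵀ * Aᵀ := by
  ext i j
  exact Finset.sum_congr rfl fun p _ => (h j p p i).eq

lemma transpose_pow_of_commute [Fintype ι] [DecidableEq ι] (A : Matrix ι ι Λ)
    (h : ∀ i j k l, Commute (A i j) (A k l)) (k : ℕ) : (A ^ k)ᵀ = Aᵀ ^ k := by
  induction k with
  | zero => simp
  | succ k ih =>
    rw [pow_succ, transpose_mul_of_commute _ _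
      fun i j a b => commute_pow_apply (fun i' j' => h i' j' a b) k i j, ih, pow_succ']

lemma transpose_pow_mul_of_transpose_mul [Fintype ι] [DecidableEq ι] {A J : Matrix ι ι Λ}
    (hA : ∀ i j k l, Commute (A i j) (A k l)) (hAJ : Aᵀ * J = J * A) (k : ℕ) :
    (A ^ k)ᵀ * J = J * A ^ k := by
  rw [transpose_pow_of_commute A hA]
  exact ((SemiconjBy.pow_right hAJ.symm k).eq).symm

lemma commute_mul_apply_mul_apply [Fintype ι] {P J : Matrix ι ι Λ}
    (hP : ∀ i j k l, Commute (P i j) (P k l)) (hJc : ∀ i j x, Commute (J i j) x)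
    (i j k l : ι) : Commute ((P * J) i j) ((P * J) k l) :=
  commute_mul_apply
    (fun a b => (commute_mul_apply (fun c d => (hP a b c d).symm) (fun c d => hJc c d _) k l).symm)
    (fun a b => hJc a b _) i j

lemma transpose_mul_mul_of_skew [Fintype ι] {P J : Matrix ι ι Λ}
    (hJc : ∀ i j x, Commute (J i j) x) (hP : Pᵀ = -P) (hJ : Jᵀ = -J) :
    (P * J)ᵀ * J = J * (P * J) := by
  rw [transpose_mul_of_commute P J fun i j k l => (hJc k l _).symm, hP, hJ, neg_mul_neg,
    mul_assoc]

end Matrix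

lemma sympJ_transpose (n : ℕ) (Λ : Type*) [Ring Λ] : (sympJ n Λ)ᵀ = -sympJ n Λ := by
  simp only [sympJ, fromBlocks_transpose, transpose_zero, transpose_one, transpose_neg,
    fromBlocks_neg, neg_zero, neg_neg]

lemma commute_sympJ_apply {n : ℕ} {Λ : Type*} [Ring Λ] (i j : Fin n ⊕ Fin n) (x : Λ) :
    Commute (sympJ n Λ i j) x := by
  have hcast : sympJ n Λ = (sympJ n ℤ).map (Int.cast : ℤ → Λ) := by
    rw [sympJ, sympJ, fromBlocks_map, Matrix.map_neg _ Int.cast_neg,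
      Matrix.map_zero _ Int.cast_zero, Matrix.map_one _ Int.cast_zero Int.cast_one]
  rw [hcast]
  exact Int.cast_commute _ x

lemma transpose_sqrtOneSub_mul {ι Λ : Type*} [Fintype ι] [DecidableEq ι] [Ring Λ]
    [Algebra ℝ Λ] {M J : Matrix ι ι Λ} (hM : ∀ i j k l, Commute (M i j) (M k l))
    (hMJ : Mᵀ * J = J * M) (K : ℕ) :
    (sqrtOneSub K M)ᵀ * J = J * sqrtOneSub K M := by
  have hpow := transpose_pow_mul_of_transpose_mul (A := -M)
    (fun i j k l => (hM i j k l).neg_left.neg_right)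
    (by rw [transpose_neg, neg_mul, hMJ, mul_neg])
  rw [sqrtOneSub, transpose_sum, Finset.sum_mul, Finset.mul_sum]
  exact Finset.sum_congr rfl fun k _ => by
    rw [transpose_smul, smul_mul_assoc, hpow k, mul_smul_comm]

lemma commute_mul_of_anticommute {Λ : Type*} [Ring Λ] {x y z : Λ}
    (hxy : x * y = -(y * x)) (hxz : x * z = -(z * x)) : Commute x (y * z) := by
  calc x * (y * z) = -(y * (x * z)) := by rw [← mul_assoc, hxy, neg_mul, mul_assoc]
    _ = y * z * x := by rw [hxz, mul_neg, neg_neg, mul_assoc]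

section Odd

variable {ι κ Λ : Type*} [Ring Λ] {θ : Matrix ι κ Λ}
  (hodd : ∀ i j k l, θ i j * θ k l = -(θ k l * θ i j))
include hodd

lemma transpose_mul_transpose_of_anticommute [Fintype κ] : (θ * θᵀ)ᵀ = -(θ * θᵀ) := by
  ext i j
  rw [transpose_apply, neg_apply, mul_apply, mul_apply, ← Finset.sum_neg_distrib]
  exact Finset.sum_congr rfl fun l _ => hodd j l i l

lemma commute_apply_mul_transpose_apply [Fintype κ] (a : ι) (b : κ) (i j : ι) :
    Commute (θ a b) ((θ * θᵀ) i j) :=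
  Commute.sum_right _ _ _ fun l _ => commute_mul_of_anticommute (hodd a b i l) (hodd a b j l)

lemma commute_mul_transpose_apply [Fintype κ] (i j k l : ι) :
    Commute ((θ * θᵀ) i j) ((θ * θᵀ) k l) :=
  commute_mul_apply (fun a b => commute_apply_mul_transpose_apply hodd a b k l)
    (fun a b => commute_apply_mul_transpose_apply hodd b a k l) i j

end Odd

/-- with `θ` a `2n × m` matrix of odd (pairwise anticommuting)
elements, `θ̂ = θᵀJ`, and `B = √(I_{2n} - θθ̂)` defined by the terminating
binomial Taylor series, one has `BᵀJ = JB`. -/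
theorem sqrt_symplectic_transpose (m n : ℕ) (Λ : Type*) [Ring Λ] [Algebra ℝ Λ]
    (θ : Matrix (Fin n ⊕ Fin n) (Fin m) Λ)
    (hodd : ∀ i j k l, θ i j * θ k l = -(θ k l * θ i j)) :
    (sqrtOneSub (n * m + 1) (θ * (θᵀ * sympJ n Λ)))ᵀ * sympJ n Λ
      = sympJ n Λ * sqrtOneSub (n * m + 1) (θ * (θᵀ * sympJ n Λ)) := by
  rw [← Matrix.mul_assoc]
  exact transpose_sqrtOneSub_mul
    (commute_mul_apply_mul_apply (commute_mul_transpose_apply hodd) commute_sympJ_apply)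
    (transpose_mul_mul_of_skew commute_sympJ_apply
      (transpose_mul_transpose_of_anticommute hodd) (sympJ_transpose n Λ)) _
end
end

section
/- Let N = I − M where M is an m×m matrix with nilpotent entries generated by finitely many pairwise-anticommuting odd variables (so every entry of M is nilpotent and tr(Mᵏ) vanishes for large k). Then det(I − M) = exp(−Σ_{k≥1} tr(Mᵏ)/k), where the sum is finite by nilpotency. -/
/-!
Put `F(X) = det(1 - X • M)`, the reversed characteristic polynomial. Since `M` is nilpotent,
`1 - X • M` is inverted by the finite geometric series `∑ Xᵏ Mᵏ`, so Jacobi's formula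
`F' = tr(adj(1 - X • M) · (-M))` becomes the linear differential equation `F' = -L' F`, where
`L(X) = ∑ tr(Mᵏ⁺¹) Xᵏ⁺¹ / (k + 1)` is nilpotent. Hence `exp(L) F` has derivative zero, so over a
`ℚ`-algebra it is the constant `1`, giving `F = exp(-L)`; evaluating at `X = 1` proves the claim.
-/

open Matrix Polynomial Finset

namespace Polynomial

variable {R : Type*} [CommRing R]

theorem derivative_det {n : Type*} [Fintype n] [DecidableEq n] (N : Matrix n n R[X]) :
    derivative N.det = trace (adjugate N * N.map derivative) := by
  have hcol (j : n) : (N.updateCol j fun i => derivative (N i j)).det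
      = (adjugate N * N.map derivative) j j := by
    rw [← cramer_apply, cramer_eq_adjugate_mulVec]
    rfl
  simp only [trace, Matrix.diag, ← hcol, det_apply', map_sum, derivative_intCast_mul,
    derivative_prod_finset, mul_sum]
  rw [sum_comm]
  refine sum_congr rfl fun j _ => sum_congr rfl fun σ _ => ?_
  rw [← mul_prod_erase univ _ (mem_univ j), updateCol_self, mul_comm (derivative _)]
  congr 2
  exact prod_congr rfl fun i hi => by rw [updateCol_ne (ne_of_mem_erase hi)]

variable [Algebra ℚ R]

theorem derivative_rat_smul_C_mul_X_pow_succ (c : R) (k : ℕ) :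
    derivative (((1 : ℚ) / (k + 1)) • (C c * X ^ (k + 1))) = C c * X ^ k := by
  rw [map_rat_smul, derivative_C_mul_X_pow, Nat.add_sub_cancel, C_mul, map_natCast,
    mul_right_comm, mul_comm, ← nsmul_eq_mul, ← Nat.cast_smul_eq_nsmul ℚ, smul_smul,
    Nat.cast_succ, one_div_mul_cancel (by positivity), one_smul]

end Polynomial

theorem IsNilpotent.derivative_exp {R : Type*} [CommRing R] [Algebra ℚ R] {a : R[X]}
    (ha : IsNilpotent a) : derivative (exp a) = derivative a * exp a := by
  obtain ⟨k, hk⟩ := ha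
  have hk' : a ^ (k + 1) = 0 := pow_eq_zero_of_le k.le_succ hk
  conv_lhs => rw [exp_eq_sum hk']
  rw [exp_eq_sum hk, map_sum, sum_range_succ', mul_sum]
  simp only [map_rat_smul, derivative_pow, pow_zero, derivative_one, smul_zero, add_zero,
    add_tsub_cancel_right, mul_smul_comm]
  refine sum_congr rfl fun i _ => ?_
  rw [map_natCast, mul_assoc, ← nsmul_eq_mul, ← Nat.cast_smul_eq_nsmul ℚ, smul_smul,
    mul_comm (a ^ i), Nat.factorial_succ, Nat.cast_mul, mul_inv, mul_right_comm,
    inv_mul_cancel₀ (by positivity), one_mul]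

namespace Matrix

variable {R : Type*} [CommRing R] {n : Type*} [Fintype n] [DecidableEq n]

theorem adjugate_eq_det_smul_of_mul_eq_one {A B : Matrix n n R} (h : A * B = 1) :
    adjugate A = A.det • B := by
  rw [← Matrix.mul_one (adjugate A), ← h, ← Matrix.mul_assoc, adjugate_mul, smul_mul,
    Matrix.one_mul]

theorem derivative_charpolyRev {M : Matrix n n R} {D : ℕ} (hM : M ^ D = 0) :
    derivative M.charpolyRev =
      -(∑ k ∈ range D, C (trace (M ^ (k + 1))) * X ^ k) * M.charpolyRev := by
  have hinv : (1 - (X : R[X]) • M.map C) * ∑ k ∈ range D, ((X : R[X]) • M.map C) ^ k = 1 := by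
    rw [mul_neg_geom_sum, _root_.smul_pow, ← C.mapMatrix_apply, ← map_pow, hM, map_zero,
      smul_zero, sub_zero]
  have hder : (1 - (X : R[X]) • M.map C).map derivative = -M.map C := by
    ext i j
    by_cases h : i = j <;> simp [h]
  have htr (k : ℕ) : trace ((M.map C) ^ (k + 1)) = C (trace (M ^ (k + 1))) := by
    rw [← C.mapMatrix_apply, ← map_pow, C.mapMatrix_apply, AddMonoidHom.map_trace]
  rw [charpolyRev, derivative_det, adjugate_eq_det_smul_of_mul_eq_one hinv, hder]
  simp only [_root_.smul_pow, smul_mul, Matrix.mul_neg, sum_mul, ← pow_succ, trace_smul,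
    trace_neg, trace_sum, htr, smul_eq_mul]
  rw [neg_mul, mul_comm]
  simp_rw [mul_comm (X ^ _ : R[X])]

theorem det_one_sub_eq_eval_one_charpolyRev (M : Matrix n n R) :
    det (1 - M) = eval 1 M.charpolyRev := by
  rw [charpolyRev, ← coe_evalRingHom, RingHom.map_det]
  congr 1
  ext i j
  by_cases h : i = j <;> simp [h]

theorem pow_apply_mem_pow {I : Ideal R} {M : Matrix n n R} (hM : ∀ i j, M i j ∈ I) (k : ℕ)
    (i j : n) : (M ^ k) i j ∈ I ^ k := by
  induction k generalizing j with
  | zero => simp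
  | succ k ih =>
    rw [pow_succ, pow_succ, mul_apply]
    exact sum_mem fun l _ => Ideal.mul_mem_mul (ih l) (hM l j)

theorem det_one_sub_eq_exp_neg_sum_trace_pow [Algebra ℚ R] {M : Matrix n n R} {D : ℕ}
    (hM : M ^ D = 0) :
    det (1 - M) =
      IsNilpotent.exp (-∑ k ∈ range D, ((1 : ℚ) / (k + 1)) • trace (M ^ (k + 1))) := by
  have : IsAddTorsionFree R := .of_module_rat R
  set L : R[X] := ∑ k ∈ range D, ((1 : ℚ) / (k + 1)) • (C (trace (M ^ (k + 1))) * X ^ (k + 1))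
  have hL : IsNilpotent L := isNilpotent_sum fun k _ =>
    ((Commute.all _ _).isNilpotent_mul_right
      ((isNilpotent_trace_of_isNilpotent (IsNilpotent.pow_succ k ⟨D, hM⟩)).map C)).smul _
  have hL' : derivative L = ∑ k ∈ range D, C (trace (M ^ (k + 1))) * X ^ k := by
    simp only [L, map_sum, derivative_rat_smul_C_mul_X_pow_succ]
  have hconst : derivative (IsNilpotent.exp L * M.charpolyRev) = 0 := by
    rw [derivative_mul, hL.derivative_exp, derivative_charpolyRev hM, hL']
    ring
  have hexp_mul : IsNilpotent.exp L * M.charpolyRev = 1 := by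
    rw [eq_C_of_derivative_eq_zero hconst, coeff_zero_eq_eval_zero, eval_mul, eval_charpolyRev,
      ← coe_evalRingHom, IsNilpotent.map_exp hL]
    simp [L]
  have hcharpolyRev : M.charpolyRev = IsNilpotent.exp (-L) := by
    rw [← mul_one (IsNilpotent.exp (-L)), ← hexp_mul, ← mul_assoc,
      IsNilpotent.exp_neg_mul_exp_self hL, one_mul]
  rw [det_one_sub_eq_eval_one_charpolyRev, hcharpolyRev, ← coe_evalRingHom,
    IsNilpotent.map_exp hL.neg]
  simp [L, eval_finsetSum, Polynomial.eval_smul]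

end Matrix

/-- if `M` is an `m × m` matrix whose entries lie in an ideal `I`
with `I ^ D = ⊥` (the nilpotent ideal generated by finitely many odd variables,
so all traces `tr(Mᵏ)` with `k ≥ D` vanish and all sums terminate), then
`det(I − M) = exp(−Σ_{k≥1} tr(Mᵏ)/k)`, both series being finite. -/
theorem det_one_sub_eq_exp_neg_sum_trace (m D : ℕ) (Λ : Type*) [CommRing Λ]
    [Algebra ℚ Λ] (M : Matrix (Fin m) (Fin m) Λ)
    (I : Ideal Λ) (hI : I ^ D = ⊥) (hM : ∀ i j, M i j ∈ I) :
    Matrix.det (1 - M)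
      = ∑ j ∈ Finset.range D, ((1 : ℚ) / (Nat.factorial j)) •
          (-(∑ k ∈ Finset.range D, ((1 : ℚ) / (k + 1)) • Matrix.trace (M ^ (k + 1)))) ^ j := by
  have hMD : M ^ D = 0 := by
    ext i j
    simpa [hI] using pow_apply_mem_pow hM D i j
  have hS : (∑ k ∈ range D, ((1 : ℚ) / (k + 1)) • trace (M ^ (k + 1))) ∈ I :=
    sum_mem fun k _ => Submodule.smul_of_tower_mem I _ <| sum_mem fun l _ =>
      Ideal.pow_le_self k.succ_ne_zero (pow_apply_mem_pow hM (k + 1) l l)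
  have hSD : (-∑ k ∈ range D, ((1 : ℚ) / (k + 1)) • trace (M ^ (k + 1))) ^ D = 0 := by
    simpa [hI] using Ideal.pow_mem_pow (neg_mem hS) D
  rw [det_one_sub_eq_exp_neg_sum_trace_pow hMD, IsNilpotent.exp_eq_sum hSD]
  simp only [one_div]
end

section
/- Let I be an invariant integral on the Hopf superalgebra of regular functions on OSp(m|2n) given by I(f) = ∫_{O(m)×Sp(2n)₀} ∫_{B_{2mn}} det(A)^{-1} f (Theorem InvInt). Then I is non-degenerate: if f ∈ C^∞(O(m)×Sp(2n))₀ ⊗ Λ_{2mn} satisfies I(fg) = 0 for all g in the same algebra, then f = 0. The proof reduces to: writing f = Σ_A f_A θ_A over the monomial basis θ_A of Λ_{2mn}, choosing A with f_A ≠ 0 of lowest degree and θ_B complementary with ∫_B θ_Aθ_B ≠ 0, the choice g = det(A) h θ_B forces ∫ f_A h = 0 for all h, contradicting non-degeneracy of the Haar integral on the group. -/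
/-!
Take the monomial `θ_A` of lowest degree occurring in `f`. Multiplying by the complementary
monomial `θ_{Aᶜ}` kills every other monomial of `f` (each shares a generator with `Aᶜ`), so
`f θ_{Aᶜ} = ± f_A θ_top` and `u f θ_{Aᶜ} = ± u_∅ f_A θ_top`, the top monomial absorbing all
of `u` but its body. Taking `g = s θ_{Aᶜ}` turns the Berezin integral of `u f g` into
`± u_∅ f_A s`, and non-degeneracy of `μ` at `f_A ≠ 0` produces an `s` with nonzero pairing.
-/

section Anticommuting

variable {ι T : Type*} [Ring T] {θ : ι → T}

theorem prod_map_eq_or_eq_neg_of_perm (hanti : ∀ i j, θ i * θ j = -(θ j * θ i))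
    {l l' : List ι} (h : l.Perm l') :
    (l.map θ).prod = (l'.map θ).prod ∨ (l.map θ).prod = -(l'.map θ).prod := by
  induction h with
  | nil => exact .inl rfl
  | cons x _ ih => rcases ih with h | h <;> simp [h]
  | swap x y l =>
    right
    simp only [List.map_cons, List.prod_cons, ← mul_assoc, hanti y x, neg_mul]
  | trans _ _ ih₁ ih₂ => rcases ih₁ with h₁ | h₁ <;> rcases ih₂ with h₂ | h₂ <;> simp [h₁, h₂]

theorem prod_map_eq_zero_of_not_nodup (hanti : ∀ i j, θ i * θ j = -(θ j * θ i))
    (hsq : ∀ i, θ i * θ i = 0) {l : List ι} (h : ¬ l.Nodup) : (l.map θ).prod = 0 := by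
  obtain ⟨a, ha⟩ : ∃ a, [a, a].Sublist l := by simpa [List.nodup_iff_sublist] using h
  obtain ⟨l', hl'⟩ := ha.exists_perm_append
  have hzero : (([a, a] ++ l').map θ).prod = 0 := by simp [← mul_assoc, hsq]
  rcases prod_map_eq_or_eq_neg_of_perm hanti hl' with h | h <;> simp only [h, hzero, neg_zero]

end Anticommuting

section Monomials

variable {ι R T : Type*} [LinearOrder ι] [CommRing R] [Ring T] [Algebra R T] {θ : ι → T}
  {b : Module.Basis (Finset ι) R T}

theorem basis_empty_eq_one (hb : ∀ A : Finset ι, b A = ((A.sort (· ≤ ·)).map θ).prod) :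
    b ∅ = 1 := by
  simp [hb]

theorem basis_mul_basis_of_disjoint (hanti : ∀ i j, θ i * θ j = -(θ j * θ i))
    (hb : ∀ A : Finset ι, b A = ((A.sort (· ≤ ·)).map θ).prod) {A B : Finset ι}
    (h : Disjoint A B) : ∃ ε : R, IsUnit ε ∧ b A * b B = ε • b (A ∪ B) := by
  have hperm : (A.sort (· ≤ ·) ++ B.sort (· ≤ ·)).Perm ((A ∪ B).sort (· ≤ ·)) := by
    rw [← Multiset.coe_eq_coe, ← Multiset.coe_add, Finset.sort_eq, Finset.sort_eq,
      Finset.sort_eq, ← Finset.disjUnion_eq_union A B h]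
    rfl
  rw [hb, hb, hb, ← List.prod_append, ← List.map_append]
  rcases prod_map_eq_or_eq_neg_of_perm hanti hperm with h | h
  · exact ⟨1, isUnit_one, by rw [h, one_smul]⟩
  · exact ⟨-1, isUnit_one.neg, by rw [h, neg_smul, one_smul]⟩

theorem basis_mul_basis_of_not_disjoint (hanti : ∀ i j, θ i * θ j = -(θ j * θ i))
    (hsq : ∀ i, θ i * θ i = 0) (hb : ∀ A : Finset ι, b A = ((A.sort (· ≤ ·)).map θ).prod)
    {A B : Finset ι} (h : ¬ Disjoint A B) : b A * b B = 0 := by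
  rw [hb, hb, ← List.prod_append, ← List.map_append]
  refine prod_map_eq_zero_of_not_nodup hanti hsq fun hnd => h ?_
  exact Finset.disjoint_left.mpr fun i hiA hiB =>
    List.disjoint_of_nodup_append hnd ((Finset.mem_sort _).mpr hiA) ((Finset.mem_sort _).mpr hiB)

variable [Fintype ι]

theorem mul_basis_univ (hanti : ∀ i j, θ i * θ j = -(θ j * θ i)) (hsq : ∀ i, θ i * θ i = 0)
    (hb : ∀ A : Finset ι, b A = ((A.sort (· ≤ ·)).map θ).prod) (u : T) :
    u * b Finset.univ = b.repr u ∅ • b Finset.univ := by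
  conv_lhs => rw [← b.sum_repr u, Finset.sum_mul]
  refine (Finset.sum_eq_single ∅ (fun C _ hC => ?_) (by simp)).trans ?_
  · rw [smul_mul_assoc, basis_mul_basis_of_not_disjoint hanti hsq hb, smul_zero]
    rwa [← Finset.top_eq_univ, disjoint_top]
  · rw [smul_mul_assoc, basis_empty_eq_one hb, one_mul]

theorem mul_basis_compl_of_card_le (hanti : ∀ i j, θ i * θ j = -(θ j * θ i))
    (hsq : ∀ i, θ i * θ i = 0) (hb : ∀ A : Finset ι, b A = ((A.sort (· ≤ ·)).map θ).prod)
    {f : T} {A : Finset ι} (hA : A ∈ (b.repr f).support)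
    (hmin : ∀ D ∈ (b.repr f).support, A.card ≤ D.card) :
    f * b Aᶜ = b.repr f A • (b A * b Aᶜ) := by
  conv_lhs => rw [← b.linearCombination_repr f, Finsupp.linearCombination_apply, Finsupp.sum,
    Finset.sum_mul]
  refine (Finset.sum_eq_single_of_mem A hA fun D hD hDA => ?_).trans (smul_mul_assoc _ _ _)
  have hDA' : ¬ D ⊆ A := fun hsub => hDA (Finset.eq_of_subset_of_card_le hsub (hmin D hD))
  rw [smul_mul_assoc, basis_mul_basis_of_not_disjoint hanti hsq hb, smul_zero]
  rwa [disjoint_compl_right_iff]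

end Monomials

/-- non-degeneracy of the invariant integral on `OSp(m|2n)`
(abstract formulation).  Let `R` be a commutative algebra (the regular
functions on `O(m) × Sp(2n)`) with a non-degenerate linear functional `μ`
(Haar integration), and let `T = R ⊗ Λ_N` be the algebra of superfunctions:
`T` is generated over `R` by odd anticommuting generators `θ i`, and is free
as an `R`-module with basis the ordered monomials `θ_A` indexed by
`A : Finset (Fin N)`, the Berezin integral being the `θ_{univ}`-coefficient.
If `u ∈ T` (the density `det(A)⁻¹`) has invertible body, then the pairing
`(f, g) ↦ (μ ⊗ β)(u f g)` is non-degenerate: any `f` pairing to zero with all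
`g` vanishes. -/
theorem invariant_integral_nondegenerate (N : ℕ)
    (R T : Type*) [CommRing R] [Algebra ℝ R] [Ring T] [Algebra R T]
    (θ : Fin N → T)
    (hanti : ∀ i j, θ i * θ j = -(θ j * θ i))
    (hsq : ∀ i, θ i * θ i = 0)
    (b : Module.Basis (Finset (Fin N)) R T)
    (hb : ∀ A : Finset (Fin N), b A = ((A.sort (· ≤ ·)).map θ).prod)
    (μ : R →ₗ[ℝ] ℝ)
    (hμ : ∀ r : R, r ≠ 0 → ∃ s : R, μ (r * s) ≠ 0)
    (u : T) (hu : IsUnit (b.repr u ∅)) :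
    ∀ f : T, (∀ g : T, μ (b.repr (u * f * g) Finset.univ) = 0) → f = 0 := by
  intro f hf
  by_contra hf0
  obtain ⟨A, hA, hmin⟩ := (b.repr f).support.exists_min_image Finset.card
    (Finsupp.support_nonempty_iff.mpr (b.repr.map_ne_zero_iff.mpr hf0))
  obtain ⟨ε, hε, hAAc⟩ := basis_mul_basis_of_disjoint hanti hb (disjoint_compl_right (a := A))
  rw [Finset.union_compl] at hAAc
  have hcoeff : ∀ s : R, b.repr (u * f * (s • b Aᶜ)) Finset.univ
      = b.repr f A * ε * b.repr u ∅ * s := by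
    intro s
    rw [mul_smul_comm, mul_assoc, mul_basis_compl_of_card_le hanti hsq hb hA hmin, hAAc,
      smul_smul, mul_smul_comm, mul_basis_univ hanti hsq hb, smul_smul, smul_smul, map_smul,
      b.repr_self, Finsupp.smul_apply, Finsupp.single_eq_same, smul_eq_mul, mul_one]
    ring
  have hne : b.repr f A * ε * b.repr u ∅ ≠ 0 := by
    rw [mul_assoc]
    exact (hε.mul hu).mul_left_eq_zero.not.mpr (Finsupp.mem_support_iff.mp hA)
  obtain ⟨s, hs⟩ := hμ _ hne
  exact hs (hcoeff s ▸ hf _)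
end
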